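/- arXiv:0807.5054 — 2 statements merged into one kernel-verified Lean document; each statement's English description precedes it below -/
import Mathlib

section
/- For d ≥ 2, a vector-valued function f : ℝ^d → ℝ^d is isotropic (f(Q r) = Q f(r) for all orthogonal Q) if and only if there exists a scalar function β : ℝ≥0 → ℝ with f(r) = β(|r|²) r for all r; in particular f(0) = 0 and f(−r) = −f(r). -/
/-!
The Householder reflection in `s - r` maps `s` to `r` whenever `|s| = |r|`, so the orthogonal group
acts transitively on spheres; hence `r ⬝ᵥ f r / r ⬝ᵥ r` depends only on `|r|²` for isotropic `f`.
Moreover `-householder r` fixes `r` and negates `r⊥`, so `f r`, being fixed by it as well, is a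
multiple of `r`. Together these give `f r = β (|r|²) • r`; the converse holds because orthogonal
matrices preserve the dot product.
-/

open Matrix

namespace Matrix

variable {n K : Type*} [Fintype n] [DecidableEq n]

section Field

variable [Field K]

/-- For `u ⬝ᵥ u = 0` (in particular `u = 0`) this is `1`, since `2 / 0 = 0`. -/
def householder (u : n → K) : Matrix n n K :=
  1 - (2 / (u ⬝ᵥ u)) • vecMulVec u u

theorem householder_mulVec (u x : n → K) :
    householder u *ᵥ x = x - (2 / (u ⬝ᵥ u) * (u ⬝ᵥ x)) • u := by
  rw [householder, sub_mulVec, one_mulVec, smul_mulVec, vecMulVec_mulVec, op_smul_eq_smul,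
    smul_smul]

theorem transpose_householder (u : n → K) : (householder u)ᵀ = householder u := by
  rw [householder, transpose_sub, transpose_one, transpose_smul, transpose_vecMulVec]

theorem householder_mul_transpose (u : n → K) : householder u * (householder u)ᵀ = 1 := by
  rw [transpose_householder]
  by_cases hu : u ⬝ᵥ u = 0
  · simp [householder, hu]
  · have hc : 2 / (u ⬝ᵥ u) * (u ⬝ᵥ u) = 2 := div_mul_cancel₀ 2 hu
    simp only [householder, sub_mul, mul_sub, one_mul, mul_one, smul_mul_smul_comm,
      vecMulVec_mul_vecMulVec, vecMulVec_smul, smul_smul]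
    rw [mul_assoc, hc]
    module

end Field

theorem householder_sub_mulVec {u v : n → ℝ} (h : u ⬝ᵥ u = v ⬝ᵥ v) :
    householder (u - v) *ᵥ u = v := by
  by_cases huv : u = v
  · simp [householder, huv]
  · have hpos : (u - v) ⬝ᵥ (u - v) ≠ 0 :=
      fun h0 => huv (sub_eq_zero.mp (dotProduct_self_eq_zero.mp h0))
    have hhalf : (u - v) ⬝ᵥ (u - v) = 2 * ((u - v) ⬝ᵥ u) := by
      simp only [sub_dotProduct, dotProduct_sub, dotProduct_comm v u, h]
      ring
    have ha : (u - v) ⬝ᵥ u ≠ 0 := by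
      rw [hhalf] at hpos
      exact right_ne_zero_of_mul hpos
    have hc : 2 / (2 * ((u - v) ⬝ᵥ u)) * ((u - v) ⬝ᵥ u) = 1 := by
      field_simp
    rw [householder_mulVec, hhalf, hc, one_smul, sub_sub_cancel]

theorem mulVec_dotProduct_mulVec {Q : Matrix n n ℝ} (hQ : Q * Qᵀ = 1) (x y : n → ℝ) :
    Q *ᵥ x ⬝ᵥ Q *ᵥ y = x ⬝ᵥ y := by
  rw [dotProduct_mulVec, vecMul_mulVec, mul_eq_one_comm.mp hQ, vecMul_one]

end Matrix

section Isotropic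

variable {n : Type*} [Fintype n] [DecidableEq n]

def IsIsotropic (f : (n → ℝ) → n → ℝ) : Prop :=
  ∀ Q : Matrix n n ℝ, Q * Qᵀ = 1 → ∀ r, f (Q *ᵥ r) = Q *ᵥ f r

namespace IsIsotropic

variable {f : (n → ℝ) → n → ℝ}

theorem map_neg (hf : IsIsotropic f) (r : n → ℝ) : f (-r) = -f r := by
  simpa [neg_mulVec] using hf (-1) (by simp) r

theorem map_zero (hf : IsIsotropic f) : f 0 = 0 := by
  have h := hf.map_neg 0
  rw [neg_zero] at h
  linear_combination (norm := module) (1 / 2 : ℝ) • h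

theorem eq_smul_self (hf : IsIsotropic f) (r : n → ℝ) :
    f r = ((r ⬝ᵥ f r) / (r ⬝ᵥ r)) • r := by
  by_cases hr : r = 0
  · simp [hr, hf.map_zero]
  have hrr : r ⬝ᵥ r ≠ 0 := fun h => hr (dotProduct_self_eq_zero.mp h)
  have hQ : -householder r * (-householder r)ᵀ = 1 := by
    rw [transpose_neg, neg_mul_neg, householder_mul_transpose]
  have hQr : -householder r *ᵥ r = r := by
    rw [neg_mulVec, householder_mulVec, div_mul_cancel₀ 2 hrr]
    module
  have h := hf _ hQ r
  rw [hQr, neg_mulVec, householder_mulVec] at h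
  linear_combination (norm := module) (1 / 2 : ℝ) • h

theorem dotProduct_map_eq (hf : IsIsotropic f) {r s : n → ℝ} (h : r ⬝ᵥ r = s ⬝ᵥ s) :
    r ⬝ᵥ f r = s ⬝ᵥ f s := by
  have hQ := householder_mul_transpose (r - s)
  rw [← householder_sub_mulVec h, hf _ hQ, mulVec_dotProduct_mulVec hQ]

theorem exists_eq_smul (hf : IsIsotropic f) : ∃ β : ℝ → ℝ, ∀ r, f r = β (r ⬝ᵥ r) • r := by
  have hfac : (fun r => (r ⬝ᵥ f r) / (r ⬝ᵥ r)).FactorsThrough (fun r => r ⬝ᵥ r) :=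
    fun r s h => by simp only [h, hf.dotProduct_map_eq h]
  exact ⟨Function.extend _ _ 0, fun r => by rw [hfac.extend_apply]; exact hf.eq_smul_self r⟩

end IsIsotropic

theorem isIsotropic_of_eq_smul {f : (n → ℝ) → n → ℝ} (β : ℝ → ℝ)
    (hβ : ∀ r, f r = β (r ⬝ᵥ r) • r) : IsIsotropic f := fun Q hQ r => by
  rw [hβ, hβ, mulVec_smul, mulVec_dotProduct_mulVec hQ]

end Isotropic

theorem stmt7_general {d : ℕ} (f : (Fin d → ℝ) → (Fin d → ℝ)) :
    ((∀ Q : Matrix (Fin d) (Fin d) ℝ, Q * Qᵀ = 1 →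
        ∀ r, f (Q.mulVec r) = Q.mulVec (f r)) ↔
      ∃ β : ℝ → ℝ, ∀ r, f r = β (∑ i, r i ^ 2) • r) ∧
    ((∀ Q : Matrix (Fin d) (Fin d) ℝ, Q * Qᵀ = 1 →
        ∀ r, f (Q.mulVec r) = Q.mulVec (f r)) →
      f 0 = 0 ∧ ∀ r, f (-r) = -f r) := by
  have hsq (r : Fin d → ℝ) : ∑ i, r i ^ 2 = r ⬝ᵥ r := by simp only [dotProduct, sq]
  simp only [hsq]
  exact ⟨⟨IsIsotropic.exists_eq_smul, fun ⟨β, hβ⟩ => isIsotropic_of_eq_smul β hβ⟩,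
    fun hf => ⟨IsIsotropic.map_zero hf, IsIsotropic.map_neg hf⟩⟩

theorem stmt7 {d : ℕ} (hd : 2 ≤ d) (f : (Fin d → ℝ) → (Fin d → ℝ)) :
    ((∀ Q : Matrix (Fin d) (Fin d) ℝ, Q * Qᵀ = 1 →
        ∀ r, f (Q.mulVec r) = Q.mulVec (f r)) ↔
      ∃ β : ℝ → ℝ, ∀ r, f r = β (∑ i, r i ^ 2) • r) ∧
    ((∀ Q : Matrix (Fin d) (Fin d) ℝ, Q * Qᵀ = 1 →
        ∀ r, f (Q.mulVec r) = Q.mulVec (f r)) →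
      f 0 = 0 ∧ ∀ r, f (-r) = -f r) :=
  stmt7_general f
end

section
/- Let σ, σ⊥ : ℝ≥0 → ℝ be continuous with σ(z) > 0 for z > 0 and 0 < σ⊥(z²)/σ(z²) < 1 for all z > 0. With d = 2 and the scale function s(ξ, ρ) := ∫_ρ^ξ exp(−∫_ρ^y σ⊥(z²)/(z σ(z²)) dz) dy for 0 < ρ < ξ, one has s(ξ, ρ) ≥ ρ ln(ξ/ρ), and hence s(ξ, ρ) → ∞ as ξ → ∞. -/
open Filter

theorem stmt18 (σ σperp : ℝ → ℝ)
    (hσc : Continuous σ) (hσpc : Continuous σperp)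
    (hσpos : ∀ z > (0 : ℝ), 0 < σ z)
    (hrat : ∀ z > (0 : ℝ), 0 < σperp (z ^ 2) / σ (z ^ 2) ∧
      σperp (z ^ 2) / σ (z ^ 2) < 1)
    (ρ : ℝ) (hρ : 0 < ρ) :
    (∀ ξ > ρ,
      ρ * Real.log (ξ / ρ) ≤
        ∫ y in ρ..ξ, Real.exp (-∫ z in ρ..y, σperp (z ^ 2) / (z * σ (z ^ 2)))) ∧
    Tendsto (fun ξ =>
        ∫ y in ρ..ξ, Real.exp (-∫ z in ρ..y, σperp (z ^ 2) / (z * σ (z ^ 2))))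
      atTop atTop := by
  set f : ℝ → ℝ := fun z => σperp (z ^ 2) / (z * σ (z ^ 2)) with hf
  -- continuity of f on sets avoiding 0
  have hfcont : ∀ {s : Set ℝ}, (∀ z ∈ s, 0 < z) → ContinuousOn f s := by
    intro s hs
    apply ContinuousOn.div
    · exact (hσpc.comp (continuous_pow 2)).continuousOn
    · exact (continuous_id.mul (hσc.comp (continuous_pow 2))).continuousOn
    · intro z hz
      have hz0 := hs z hz
      exact ne_of_gt (mul_pos hz0 (hσpos _ (by positivity)))
  have key : ∀ ξ > ρ, ρ * Real.log (ξ / ρ) ≤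
      ∫ y in ρ..ξ, Real.exp (-∫ z in ρ..y, f z) := by
    intro ξ hξ
    have hρξ : ρ ≤ ξ := le_of_lt hξ
    have huIcc : Set.uIcc ρ ξ = Set.Icc ρ ξ := Set.uIcc_of_le hρξ
    -- pointwise bound on the inner integral
    have hinner : ∀ y ∈ Set.Icc ρ ξ, (∫ z in ρ..y, f z) ≤ Real.log (y / ρ) := by
      intro y hy
      have hρy : ρ ≤ y := hy.1
      have huy : Set.uIcc ρ y = Set.Icc ρ y := Set.uIcc_of_le hρy
      have hpos : ∀ z ∈ Set.Icc ρ y, 0 < z := fun z hz => lt_of_lt_of_le hρ hz.1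
      have hfint : IntervalIntegrable f MeasureTheory.volume ρ y :=
        (hfcont (huy ▸ hpos)).intervalIntegrable
      have hgint : IntervalIntegrable (fun z => 1 / z) MeasureTheory.volume ρ y := by
        apply ContinuousOn.intervalIntegrable
        apply ContinuousOn.div continuousOn_const continuousOn_id
        intro z hz
        exact ne_of_gt (hpos z (huy ▸ hz))
      have hmono : (∫ z in ρ..y, f z) ≤ ∫ z in ρ..y, 1 / z := by
        apply intervalIntegral.integral_mono_on hρy hfint hgint
        intro z hz
        have hz0 : 0 < z := hpos z hz
        have hσz : 0 < σ (z ^ 2) := hσpos _ (by positivity)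
        have hlt := (hrat z hz0).2
        have hσpp : σperp (z ^ 2) < σ (z ^ 2) := (div_lt_one hσz).mp hlt
        show σperp (z ^ 2) / (z * σ (z ^ 2)) ≤ 1 / z
        rw [div_le_div_iff₀ (mul_pos hz0 hσz) hz0]
        nlinarith
      have hlog : (∫ z in ρ..y, 1 / z) = Real.log (y / ρ) := by
        apply integral_one_div
        rw [huy]
        intro h0
        exact absurd (h0.1) (not_le.mpr hρ)
      linarith
    -- integrability of the integrand
    have hpos' : ∀ z ∈ Set.Icc ρ ξ, 0 < z := fun z hz => lt_of_lt_of_le hρ hz.1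
    have hgc : ContinuousOn (fun y => ∫ z in ρ..y, f z) (Set.Icc ρ ξ) := by
      rw [← huIcc]
      apply intervalIntegral.continuousOn_primitive_interval
      rw [huIcc]
      exact ((hfcont hpos').mono Set.Subset.rfl).integrableOn_compact isCompact_Icc
    have hEcont : ContinuousOn (fun y => Real.exp (-∫ z in ρ..y, f z)) (Set.Icc ρ ξ) :=
      Real.continuous_exp.comp_continuousOn hgc.neg
    have hEint : IntervalIntegrable (fun y => Real.exp (-∫ z in ρ..y, f z))
        MeasureTheory.volume ρ ξ := (huIcc ▸ hEcont).intervalIntegrable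
    have hLint : IntervalIntegrable (fun y => ρ * (1 / y)) MeasureTheory.volume ρ ξ := by
      apply ContinuousOn.intervalIntegrable
      apply ContinuousOn.mul continuousOn_const
      apply ContinuousOn.div continuousOn_const continuousOn_id
      intro z hz
      exact ne_of_gt (hpos' z (huIcc ▸ hz))
    have hmono2 : (∫ y in ρ..ξ, ρ * (1 / y)) ≤
        ∫ y in ρ..ξ, Real.exp (-∫ z in ρ..y, f z) := by
      apply intervalIntegral.integral_mono_on hρξ hLint hEint
      intro y hy
      have hy0 : 0 < y := hpos' y hy
      have hyρ : 0 < y / ρ := by positivity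
      calc ρ * (1 / y) = Real.exp (-Real.log (y / ρ)) := by
            rw [Real.exp_neg, Real.exp_log hyρ]; field_simp
        _ ≤ Real.exp (-∫ z in ρ..y, f z) := by
            apply Real.exp_le_exp.mpr
            exact neg_le_neg (hinner y hy)
    have hleft : (∫ y in ρ..ξ, ρ * (1 / y)) = ρ * Real.log (ξ / ρ) := by
      rw [intervalIntegral.integral_const_mul, integral_one_div]
      rw [huIcc]
      intro h0
      exact absurd (h0.1) (not_le.mpr hρ)
    linarith
  refine ⟨key, ?_⟩
  have htend : Tendsto (fun ξ => ρ * Real.log (ξ / ρ)) atTop atTop := by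
    apply Tendsto.const_mul_atTop hρ
    exact Real.tendsto_log_atTop.comp (tendsto_id.atTop_div_const hρ)
  apply tendsto_atTop_mono' atTop _ htend
  filter_upwards [eventually_gt_atTop ρ] with ξ hξ using key ξ hξ
end
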